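/- arXiv:2405.16154 — 6 statements merged into one kernel-verified Lean document; each statement's English description precedes it below -/
import Mathlib

section
/- Let p, q be primes with q dividing (p^p-1)/(p-1), and let M in GL_p(F_p) have order q. Then the only M-invariant F_p-subspaces of the column space V = F_p^p are 0 and V. -/
/-!
Modulo `q`, `p` is a root of `1 + X + ⋯ + X ^ (p - 1)` different from `1`, so it has
multiplicative order exactly `p`. Hence `q` divides none of the factors `p ^ d - p ^ i` of
`|GL_d(𝔽_p)|` for `d < p`, and an element of order `q` acts trivially on every space of
dimension `d < p`. If `W` were a proper nonzero invariant subspace, `M` would act trivially on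
`W` and on `V ⧸ W`, so `(M - 1) ^ 2 = 0`, and in characteristic `p` this gives `M ^ p = 1`,
i.e. `q ∣ p`, which is impossible.
-/

open Module Finset

theorem orderOf_natCast_eq_of_dvd_geom_sum {p q : ℕ} [Fact p.Prime] (hq : q ≠ 1)
    (h : q ∣ ∑ i ∈ range p, p ^ i) : orderOf (p : ZMod q) = p := by
  have := ZMod.nontrivial_iff.2 hq
  have hsum : ∑ i ∈ range p, (p : ZMod q) ^ i = 0 := by
    exact_mod_cast (ZMod.natCast_eq_zero_iff _ _).2 h
  have hp0 : (p : ZMod q) ≠ 0 := fun h0 => by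
    simp [h0, zero_geom_sum, (Fact.out : p.Prime).ne_zero] at hsum
  refine orderOf_eq_prime ?_ fun h1 => hp0 ?_
  · simpa [hsum, sub_eq_zero] using (geom_sum_mul (p : ZMod q) p).symm
  · simp [h1] at hsum

theorem not_dvd_card_GL_of_lt_orderOf {K : Type*} [Field K] [Fintype K] {q d : ℕ} [Fact q.Prime]
    (hd : d < orderOf (Fintype.card K : ZMod q)) : ¬ q ∣ Nat.card (GL (Fin d) K) := by
  rw [Matrix.card_GL_field, ← ZMod.natCast_eq_zero_iff, Nat.cast_prod, prod_eq_zero_iff]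
  rintro ⟨i, -, hi⟩
  have hid : (i : ℕ) ≤ d := i.isLt.le
  set x : ZMod q := (Fintype.card K : ZMod q)
  have hfactor : x ^ d - x ^ (i : ℕ) = x ^ (i : ℕ) * (x ^ (d - i) - 1) := by
    rw [mul_sub, ← pow_add, Nat.add_sub_cancel' hid, mul_one]
  rw [Nat.cast_sub (Nat.pow_le_pow_right Fintype.card_pos hid), Nat.cast_pow, Nat.cast_pow,
    hfactor, mul_eq_zero, sub_eq_zero] at hi
  rcases hi with hi | hi
  · rw [(pow_eq_zero_iff'.1 hi).1, orderOf_zero] at hd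
    omega
  · have := Nat.le_of_dvd (by omega) (orderOf_dvd_of_pow_eq_one hi)
    omega

namespace Module.End

variable {K U : Type*} [Field K] [AddCommGroup U] [Module K U] [FiniteDimensional K U]

theorem natCard_units_eq_card_GL :
    Nat.card (Module.End K U)ˣ = Nat.card (GL (Fin (finrank K U)) K) :=
  Nat.card_congr
    (Units.mapEquiv (LinearMap.toMatrixAlgEquiv (Module.finBasis K U)).toMulEquiv).toEquiv

theorem eq_one_of_pow_eq_one_of_not_dvd_card_GL {q : ℕ} (hq : q.Prime)
    (hcard : ¬ q ∣ Nat.card (GL (Fin (finrank K U)) K)) {g : Module.End K U} (hg : g ^ q = 1) :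
    g = 1 := by
  have hu := IsUnit.of_pow_eq_one hg hq.ne_zero
  refine (pow_eq_one_iff_of_coprime (hq.coprime_iff_not_dvd.2 hcard)).1 ⟨hg, ?_⟩
  rw [← natCard_units_eq_card_GL, ← hu.unit_spec, ← Units.val_pow_eq_pow_val, pow_card_eq_one',
    Units.val_one]

theorem eq_one_of_pow_eq_one_of_finrank_lt_orderOf [Fintype K] {q : ℕ} [hq : Fact q.Prime]
    (hU : finrank K U < orderOf (Fintype.card K : ZMod q)) {g : Module.End K U} (hg : g ^ q = 1) :
    g = 1 :=
  eq_one_of_pow_eq_one_of_not_dvd_card_GL hq.out (not_dvd_card_GL_of_lt_orderOf hU) hg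

end Module.End

theorem pow_char_eq_one_of_sub_one_pow_eq_zero {R : Type*} [Ring R] {p : ℕ} [Fact p.Prime]
    [CharP R p] {x : R} {k : ℕ} (hk : k ≤ p) (h : (x - 1) ^ k = 0) : x ^ p = 1 := by
  rw [← sub_eq_zero, ← one_pow p, ← sub_pow_char_of_commute p (Commute.one_right x)]
  exact pow_eq_zero_of_le hk h

namespace Submodule

theorem sub_one_sq_eq_zero_of_restrict_eq_one_of_mapQ_eq_one {R V : Type*} [Ring R]
    [AddCommGroup V] [Module R V] {f : Module.End R V} {W : Submodule R V} (hW : W ≤ W.comap f)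
    (hres : f.restrict hW = 1) (hquot : W.mapQ W f hW = 1) : (f - 1) ^ 2 = 0 := by
  have hfix : ∀ w ∈ W, f w = w := fun w hw =>
    congrArg Subtype.val (LinearMap.congr_fun hres ⟨w, hw⟩)
  have hmove : ∀ v, f v - v ∈ W := fun v =>
    (Quotient.eq W).1 (LinearMap.congr_fun hquot (Quotient.mk v))
  ext v
  simp [sq, hfix _ (hmove v)]

theorem sub_one_sq_eq_zero_of_pow_eq_one {K V : Type*} [Field K] [Fintype K] [AddCommGroup V]
    [Module K V] [FiniteDimensional K V] {q : ℕ} [Fact q.Prime]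
    (hV : finrank K V ≤ orderOf (Fintype.card K : ZMod q)) {f : Module.End K V} (hf : f ^ q = 1)
    {W : Submodule K V} (hW : W ≤ W.comap f) (hbot : W ≠ ⊥) (htop : W ≠ ⊤) :
    (f - 1) ^ 2 = 0 := by
  have hWpos : 0 < finrank K W := Nat.pos_of_ne_zero (finrank_eq_zero.not.2 hbot)
  have hWlt : finrank K W < finrank K V := finrank_lt htop
  have hrank := W.finrank_quotient_add_finrank
  refine sub_one_sq_eq_zero_of_restrict_eq_one_of_mapQ_eq_one hW ?_ ?_
  · refine Module.End.eq_one_of_pow_eq_one_of_finrank_lt_orderOf (q := q) (by omega) ?_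
    rw [Module.End.pow_restrict]
    ext
    simp [hf]
  · refine Module.End.eq_one_of_pow_eq_one_of_finrank_lt_orderOf (q := q) (by omega) ?_
    rw [← mapQ_pow]
    ext
    simp [hf]

end Submodule

theorem stmt_4 (p q : ℕ) (hp : p.Prime) (hq : q.Prime)
    (hdvd : q ∣ ∑ i ∈ Finset.range p, p ^ i)
    (M : GL (Fin p) (ZMod p)) (hM : orderOf M = q)
    (W : Submodule (ZMod p) (Fin p → ZMod p))
    (hW : ∀ v ∈ W, (M : Matrix (Fin p) (Fin p) (ZMod p)).mulVec v ∈ W) :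
    W = ⊥ ∨ W = ⊤ := by
  have := Fact.mk hp
  have := Fact.mk hq
  have hord : orderOf (Fintype.card (ZMod p) : ZMod q) = p := by
    rw [ZMod.card]
    exact orderOf_natCast_eq_of_dvd_geom_sum hq.ne_one hdvd
  set f := Matrix.toLinAlgEquiv' (M : Matrix (Fin p) (Fin p) (ZMod p))
  have hfq : f ^ q = 1 := by
    rw [← map_pow, ← Units.val_pow_eq_pow_val, ← hM, pow_orderOf_eq_one, Units.val_one, map_one]
  have hWf : W ≤ W.comap f := fun v hv => by simpa [f] using hW v hv
  rw [or_iff_not_and_not]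
  rintro ⟨hbot, htop⟩
  have hMp : M ^ p = 1 := by
    refine Units.ext (pow_char_eq_one_of_sub_one_pow_eq_zero hp.two_le ?_)
    apply Matrix.toLinAlgEquiv'.injective
    simpa using W.sub_one_sq_eq_zero_of_pow_eq_one (by rw [hord]; simp) hfq hWf hbot htop
  have hpq : (p : ZMod q) = 0 :=
    (ZMod.natCast_eq_zero_iff _ _).2 (hM ▸ orderOf_dvd_of_pow_eq_one hMp)
  rw [ZMod.card, hpq, orderOf_zero] at hord
  exact hp.ne_zero hord.symm
end

section
/- Let p, q be primes with q dividing (p^p-1)/(p-1), and let M in GL_p(F_p) have order q. Then the matrix M - I is invertible. -/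
/-!
Let `d` be the dimension of the fixed space `ker (M - 1)`. The subgroup generated by `M` is a
`q`-group, so counting its fixed points on `𝔽_p^p` gives `p^p ≡ p^d (mod q)`. Since
`q ∣ 1 + p + ⋯ + p^(p-1)` and `p` is prime, `p` has order exactly `p` modulo `q`, hence
`p ∣ d`; as `d ≤ p` and `M ≠ 1`, we get `d = 0`.
-/

open Finset MulAction

theorem orderOf_natCast_eq_of_geom_sum_eq_zero {R : Type*} [Ring R] [Nontrivial R] {p : ℕ}
    (hp : p.Prime) (h : ∑ i ∈ range p, (p : R) ^ i = 0) : orderOf (p : R) = p := by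
  have hpow : (p : R) ^ p = 1 := by
    have := geom_sum_mul (p : R) p
    rwa [h, zero_mul, eq_comm, sub_eq_zero] at this
  refine (hp.eq_one_or_self_of_dvd _ (orderOf_dvd_of_pow_eq_one hpow)).resolve_left fun h1 ↦ ?_
  have hp1 : (p : R) = 1 := orderOf_eq_one_iff.mp h1
  -- if `p = 1` in `R`, the geometric sum equals `p = 1`
  simp [hp1] at h

theorem MulAction.fixedPoints_zpowers {G X : Type*} [Group G] [MulAction G X] (g : G) :
    fixedPoints (Subgroup.zpowers g) X = fixedBy X g := by
  ext x
  refine ⟨fun hx ↦ hx ⟨g, Subgroup.mem_zpowers g⟩, fun hx h ↦ ?_⟩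
  exact (Subgroup.zpowers_le (H := stabilizer G x)).mpr hx h.2

theorem MulAction.card_modEq_card_fixedBy {G X : Type*} [Group G] [MulAction G X] [Finite X]
    {q : ℕ} [Fact q.Prime] {g : G} (hg : orderOf g = q) :
    Nat.card X ≡ Nat.card (fixedBy X g) [MOD q] := by
  have hpgroup : IsPGroup q (Subgroup.zpowers g) :=
    IsPGroup.of_card (n := 1) (by rw [Nat.card_zpowers, hg, pow_one])
  simpa [fixedPoints_zpowers] using hpgroup.card_modEq_card_fixedPoints X

namespace LinearMap.GeneralLinearGroup

variable {K V : Type*} [Field K] [AddCommGroup V] [Module K V]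

theorem fixedBy_eq_ker_sub_one (u : LinearMap.GeneralLinearGroup K V) :
    fixedBy V u = LinearMap.ker ((u : V →ₗ[K] V) - 1) := by
  ext v
  exact sub_eq_zero.symm

variable [Finite K] [FiniteDimensional K V]

theorem card_pow_finrank_modEq_card_pow_finrank_ker {q : ℕ} [Fact q.Prime]
    {u : LinearMap.GeneralLinearGroup K V} (hu : orderOf u = q) :
    Nat.card K ^ Module.finrank K V ≡
      Nat.card K ^ Module.finrank K (LinearMap.ker ((u : V →ₗ[K] V) - 1)) [MOD q] := by
  have : Finite V := Module.finite_of_finite K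
  have := card_modEq_card_fixedBy (X := V) hu
  rwa [fixedBy_eq_ker_sub_one, SetLike.coe_sort_coe, Module.natCard_eq_pow_finrank (K := K),
    Module.natCard_eq_pow_finrank (K := K) (V := LinearMap.ker _)] at this

theorem isUnit_sub_one_of_orderOf_eq {q : ℕ} [Fact q.Prime]
    {u : LinearMap.GeneralLinearGroup K V} (hu : orderOf u = q)
    (hK : orderOf (Nat.card K : ZMod q) = Module.finrank K V) :
    IsUnit ((u : V →ₗ[K] V) - 1) := by
  set d := Module.finrank K (LinearMap.ker ((u : V →ₗ[K] V) - 1))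
  have hd : Module.finrank K V ∣ d := by
    have hmod := (ZMod.natCast_eq_natCast_iff _ _ _).mpr
      (card_pow_finrank_modEq_card_pow_finrank_ker hu)
    push_cast at hmod
    have hpow : (Nat.card K : ZMod q) ^ Module.finrank K V = 1 := hK ▸ pow_orderOf_eq_one _
    rw [hmod] at hpow
    exact hK ▸ orderOf_dvd_of_pow_eq_one hpow
  have hd_lt : d < Module.finrank K V := by
    refine (Submodule.finrank_le _).lt_of_ne fun hd_eq ↦ ?_
    have hu1 : (u : V →ₗ[K] V) - 1 = 0 :=
      LinearMap.ker_eq_top.mp (Submodule.eq_top_of_finrank_eq hd_eq)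
    have : u = 1 := Units.ext (sub_eq_zero.mp hu1)
    exact (Fact.out : q.Prime).one_lt.ne' (hu ▸ this ▸ orderOf_one)
  rw [LinearMap.isUnit_iff_ker_eq_bot, ← Submodule.finrank_eq_zero]
  exact Nat.eq_zero_of_dvd_of_lt hd hd_lt

end LinearMap.GeneralLinearGroup

theorem stmt_5 (p q : ℕ) (hp : p.Prime) (hq : q.Prime)
    (hdvd : q ∣ ∑ i ∈ Finset.range p, p ^ i)
    (M : GL (Fin p) (ZMod p)) (hM : orderOf M = q) :
    IsUnit ((M : Matrix (Fin p) (Fin p) (ZMod p)) - 1) := by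
  have : Fact p.Prime := ⟨hp⟩
  have : Fact q.Prime := ⟨hq⟩
  have hord : orderOf (p : ZMod q) = p := by
    refine orderOf_natCast_eq_of_geom_sum_eq_zero hp ?_
    exact_mod_cast (ZMod.natCast_eq_zero_iff _ _).mpr hdvd
  have hu : orderOf (Matrix.GeneralLinearGroup.toLin M) = q := by
    rw [MulEquiv.orderOf_eq, hM]
  have := LinearMap.GeneralLinearGroup.isUnit_sub_one_of_orderOf_eq hu
    (by rw [Nat.card_zmod, Module.finrank_fin_fun]; exact hord)
  rwa [← Matrix.isUnit_toLin'_iff, map_sub, Matrix.toLin'_one]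
end

section
/- Let p, q be primes with q dividing (p^p-1)/(p-1), and let M in GL_p(F_p) have order q. Then the centraliser of M in GL_p(F_p) equals the group of units of the subalgebra F_p[M], and is cyclic of order p^p - 1. -/
/-!
Write `μ` for the minimal polynomial of `M` over `𝔽_p`. Since `q ∣ (p^p - 1)/(p - 1)` and `q ≠ p`,
the multiplicative order of `p` modulo `q` is `p`, so every irreducible factor of the cyclotomic
polynomial `Φ_q` over `𝔽_p` has degree `p`. As `M ≠ 1` and `μ ∣ X^q - 1 = (X - 1) Φ_q`, `μ` shares
such a factor with `Φ_q`; since `deg μ ≤ p`, `μ` is that factor. Hence `𝔽_p[M] ≅ 𝔽_p[X]/(μ)` is the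
field with `p^p` elements, and `𝔽_p^p` is a one-dimensional vector space over it. A matrix
commuting with `M` is `𝔽_p[M]`-linear, hence multiplication by an element of `𝔽_p[M]`. So the
centraliser is the unit group of `𝔽_p[M]`, which is cyclic of order `p^p - 1`.
-/

open Polynomial Finset

theorem Nat.not_dvd_geom_sum_self {p n : ℕ} (hp : p ≠ 1) (hn : n ≠ 0) :
    ¬ p ∣ ∑ i ∈ range n, p ^ i := by
  have : Nontrivial (ZMod p) := ZMod.nontrivial_iff.2 hp
  rw [← ZMod.natCast_eq_zero_iff]
  push_cast
  simpa only [ZMod.natCast_self, zero_geom_sum, hn, if_false] using one_ne_zero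

theorem orderOf_eq_prime_of_geom_sum_eq_zero {R : Type*} [Ring R] {a : R} {n : ℕ}
    [Fact n.Prime] (hn : (n : R) ≠ 0) (h : ∑ i ∈ range n, a ^ i = 0) : orderOf a = n := by
  refine orderOf_eq_prime ?_ ?_
  · simpa [h, sub_eq_zero] using (geom_sum_mul a n).symm
  · rintro rfl
    simp_all

theorem minpoly.exists_irreducible_dvd_and_dvd_cyclotomic {K R : Type*} [Field K] [Ring R]
    [Algebra K R] {q : ℕ} [hq : Fact q.Prime] {x : R} (hx : orderOf x = q) :
    ∃ f : K[X], Irreducible f ∧ f ∣ minpoly K x ∧ f ∣ cyclotomic q K := by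
  by_contra! h
  have hcop : IsCoprime (minpoly K x) (cyclotomic q K) :=
    isCoprime_of_irreducible_dvd (fun h0 => cyclotomic_ne_zero q K h0.2) h
  have hdvd : minpoly K x ∣ cyclotomic q K * (X - 1) := by
    rw [cyclotomic_prime_mul_X_sub_one]
    exact minpoly.dvd K x (by simp [← hx, pow_orderOf_eq_one])
  have hx1 : x = 1 := by
    simpa [sub_eq_zero] using minpoly.dvd_iff.1 (hcop.dvd_of_dvd_mul_left hdvd)
  exact hq.out.ne_one (by rw [← hx, hx1, orderOf_one])

theorem Matrix.irreducible_minpoly_of_orderOf_eq {K : Type*} [Field K] [Fintype K] {p f q : ℕ}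
    [Fact p.Prime] [Fact q.Prime] (hK : Fintype.card K = p ^ f) (hpq : p.Coprime q)
    {n : Type*} [Fintype n] [DecidableEq n] (hn : Fintype.card n = orderOf ((p ^ f : ℕ) : ZMod q))
    {M : Matrix n n K} (hM : orderOf M = q) :
    Irreducible (minpoly K M) ∧ (minpoly K M).natDegree = Fintype.card n := by
  obtain ⟨g, hg, hgM, hgΦ⟩ := minpoly.exists_irreducible_dvd_and_dvd_cyclotomic (K := K) hM
  have hgdeg : g.natDegree = Fintype.card n := by
    rw [natDegree_of_dvd_cyclotomic_of_irreducible hK hpq hgΦ hg, hn, ← orderOf_units]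
    rfl
  have hM0 : minpoly K M ≠ 0 := minpoly.ne_zero (Algebra.IsIntegral.isIntegral M)
  have hMdeg : (minpoly K M).natDegree ≤ Fintype.card n :=
    (natDegree_le_of_dvd (minpoly_dvd_charpoly M) (charpoly_monic M).ne_zero).trans
      (charpoly_natDegree_eq_dim M).le
  exact ⟨(associated_of_dvd_of_natDegree_le hgM hM0 (hgdeg ▸ hMdeg)).irreducible hg,
    hMdeg.antisymm (hgdeg ▸ natDegree_le_of_dvd hgM hM0)⟩

namespace AdjoinRoot

variable (K : Type*) {R : Type*} [Field K] [Ring R] [Algebra K R] (a : R)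

/-- Unlike `Minpoly.toAdjoin`, this does not require `R` to be commutative. -/
noncomputable def minpolyLift : AdjoinRoot (minpoly K a) →ₐ[K] R :=
  Ideal.Quotient.liftₐ _ (aeval a) fun g hg => by
    rwa [Ideal.mem_span_singleton, minpoly.dvd_iff] at hg

variable {K a}

@[simp]
theorem minpolyLift_mk (g : K[X]) : minpolyLift K a (mk _ g) = aeval a g := rfl

theorem minpolyLift_injective : Function.Injective (minpolyLift K a) := by
  refine (injective_iff_map_eq_zero _).2 fun x hx => ?_
  induction x using AdjoinRoot.induction_on with
  | ih g => rwa [minpolyLift_mk, ← minpoly.dvd_iff, ← mk_eq_zero] at hx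

theorem range_minpolyLift : (minpolyLift K a).range = Algebra.adjoin K {a} := by
  rw [Algebra.adjoin_singleton_eq_range_aeval]
  ext b
  constructor
  · rintro ⟨x, rfl⟩
    induction x using AdjoinRoot.induction_on with
    | ih g => exact ⟨g, rfl⟩
  · rintro ⟨g, rfl⟩
    exact ⟨mk _ g, rfl⟩

theorem minpolyLift_mem_adjoin (x : AdjoinRoot (minpoly K a)) :
    minpolyLift K a x ∈ Algebra.adjoin K {a} :=
  range_minpolyLift (K := K) (a := a) ▸ ⟨x, rfl⟩

end AdjoinRoot

theorem Units.mem_range_map_iff {L R F : Type*} [DivisionRing L] [Ring R] [FunLike F L R]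
    [MonoidWithZeroHomClass F L R] (f : F) {u : Rˣ} :
    u ∈ (Units.map (f : L →* R)).range ↔ (u : R) ∈ Set.range f := by
  refine ⟨fun ⟨w, hw⟩ => ⟨w, by rw [← hw]; rfl⟩, fun ⟨x, hx⟩ => ?_⟩
  obtain rfl | hx0 := eq_or_ne x 0
  · have : Subsingleton R :=
      subsingleton_of_zero_eq_one (by rw [← u.mul_inv, ← hx, map_zero, zero_mul])
    exact ⟨1, Subsingleton.elim _ _⟩
  · exact ⟨Units.mk0 x hx0, Units.ext hx⟩

namespace Matrix

variable {K n : Type*} [Field K] [Fintype n] [DecidableEq n]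

/-- `K[A] ≅ K[X]/(minpoly K A)` is a field with `dim K[A] = card n`, so evaluation at a nonzero
vector `v` is a bijection `K[A] → n → K`; a matrix commuting with `A` commutes with `K[A]`, hence
agrees everywhere with the element of `K[A]` that agrees with it at `v`. -/
theorem mem_adjoin_of_commute {A B : Matrix n n K} [Fact (Irreducible (minpoly K A))]
    (hdeg : (minpoly K A).natDegree = Fintype.card n) (hB : Commute B A) :
    B ∈ Algebra.adjoin K {A} := by
  set φ := AdjoinRoot.minpolyLift K A
  have : Nonempty n := Fintype.card_pos_iff.1 (hdeg ▸ (Fact.out : Irreducible _).natDegree_pos)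
  obtain ⟨v, hv⟩ := exists_ne (0 : n → K)
  let ev : AdjoinRoot (minpoly K A) →ₗ[K] n → K :=
    LinearMap.applyₗ v ∘ₗ (toLin' : Matrix n n K ≃ₗ[K] _).toLinearMap ∘ₗ φ.toLinearMap
  have hev : ∀ x, ev x = φ x *ᵥ v := fun x => toLin'_apply _ _
  have ev_injective : Function.Injective ev := by
    refine (injective_iff_map_eq_zero _).2 fun x hx => by_contra fun hx0 => hv ?_
    calc v = φ (x⁻¹ * x) *ᵥ v := by rw [inv_mul_cancel₀ hx0, map_one, one_mulVec]
      _ = φ x⁻¹ *ᵥ ev x := by rw [map_mul, ← mulVec_mulVec, hev]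
      _ = 0 := by rw [hx, mulVec_zero]
  let b := AdjoinRoot.powerBasis (Fact.out : Irreducible (minpoly K A)).ne_zero
  have := Module.Finite.of_basis b.basis
  have ev_surjective : Function.Surjective ev :=
    (LinearMap.injective_iff_surjective_of_finrank_eq_finrank (by
      rw [Module.finrank_fintype_fun_eq_card, b.finrank, AdjoinRoot.powerBasis_dim, hdeg])).1
      ev_injective
  obtain ⟨x₀, hx₀⟩ := ev_surjective (B *ᵥ v)
  suffices B = φ x₀ from this ▸ AdjoinRoot.minpolyLift_mem_adjoin x₀
  refine ext_iff_mulVec.2 fun w => ?_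
  obtain ⟨x, rfl⟩ := ev_surjective w
  have hBx : Commute B (φ x) :=
    Algebra.commute_of_mem_adjoin_singleton_of_commute (AdjoinRoot.minpolyLift_mem_adjoin x) hB
  calc B *ᵥ ev x = φ x *ᵥ ev x₀ := by rw [hx₀, hev, mulVec_mulVec, hBx.eq, ← mulVec_mulVec]
    _ = φ x₀ *ᵥ ev x := by
      rw [hev, hev, mulVec_mulVec, mulVec_mulVec, ← map_mul, ← map_mul, mul_comm]

theorem commute_iff_mem_adjoin {A B : Matrix n n K} [Fact (Irreducible (minpoly K A))]
    (hdeg : (minpoly K A).natDegree = Fintype.card n) :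
    Commute B A ↔ B ∈ Algebra.adjoin K {A} :=
  ⟨mem_adjoin_of_commute hdeg, fun h => (Algebra.commute_of_mem_adjoin_self h).symm⟩

namespace GeneralLinearGroup

variable {M : GL n K} [Fact (Irreducible (minpoly K (M : Matrix n n K)))]

theorem mem_centralizer_iff_mem_adjoin
    (hdeg : (minpoly K (M : Matrix n n K)).natDegree = Fintype.card n) {A : GL n K} :
    A ∈ Subgroup.centralizer {M} ↔
      (A : Matrix n n K) ∈ Algebra.adjoin K {(M : Matrix n n K)} := by
  rw [Subgroup.mem_centralizer_singleton_iff, Units.ext_iff, Units.val_mul, Units.val_mul]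
  exact commute_iff_mem_adjoin hdeg

theorem centralizer_eq_range_units_map
    (hdeg : (minpoly K (M : Matrix n n K)).natDegree = Fintype.card n) :
    Subgroup.centralizer {M} =
      (Units.map (AdjoinRoot.minpolyLift K (M : Matrix n n K) :
        AdjoinRoot (minpoly K (M : Matrix n n K)) →* Matrix n n K)).range := by
  ext A
  rw [Units.mem_range_map_iff, mem_centralizer_iff_mem_adjoin hdeg,
    ← AdjoinRoot.range_minpolyLift]
  rfl

noncomputable def unitsAdjoinRootEquivCentralizer
    (hdeg : (minpoly K (M : Matrix n n K)).natDegree = Fintype.card n) :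
    (AdjoinRoot (minpoly K (M : Matrix n n K)))ˣ ≃* Subgroup.centralizer {M} :=
  (MonoidHom.ofInjective (Units.map_injective AdjoinRoot.minpolyLift_injective)).trans
    (MulEquiv.subgroupCongr (centralizer_eq_range_units_map hdeg).symm)

end GeneralLinearGroup

end Matrix

theorem stmt_7 (p q : ℕ) (hp : p.Prime) (hq : q.Prime)
    (hdvd : q ∣ ∑ i ∈ Finset.range p, p ^ i)
    (M : GL (Fin p) (ZMod p)) (hM : orderOf M = q) :
    (∀ A : GL (Fin p) (ZMod p), A ∈ Subgroup.centralizer {M} ↔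
        (A : Matrix (Fin p) (Fin p) (ZMod p)) ∈
          Algebra.adjoin (ZMod p) {(M : Matrix (Fin p) (Fin p) (ZMod p))}) ∧
      IsCyclic (Subgroup.centralizer {M}) ∧
      Nat.card (Subgroup.centralizer {M} : Subgroup (GL (Fin p) (ZMod p))) = p ^ p - 1 := by
  have : Fact p.Prime := ⟨hp⟩
  have : Fact q.Prime := ⟨hq⟩
  have hqp : q ≠ p := fun h => Nat.not_dvd_geom_sum_self hp.ne_one hp.ne_zero (h ▸ hdvd)
  have hord : orderOf (p : ZMod q) = p := orderOf_eq_prime_of_geom_sum_eq_zero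
    (by rwa [Ne, ZMod.natCast_eq_zero_iff, Nat.prime_dvd_prime_iff_eq hq hp])
    (by exact_mod_cast (ZMod.natCast_eq_zero_iff _ _).2 hdvd)
  obtain ⟨hirr, hdeg⟩ := Matrix.irreducible_minpoly_of_orderOf_eq (f := 1)
    (M := (M : Matrix (Fin p) (Fin p) (ZMod p))) (by simp)
    ((Nat.coprime_primes hp hq).2 hqp.symm) (by simp [hord]) (by rwa [orderOf_units])
  have : Fact _ := ⟨hirr⟩
  let b := AdjoinRoot.powerBasis hirr.ne_zero
  have := Module.Finite.of_basis b.basis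
  have : Finite (AdjoinRoot (minpoly (ZMod p) (M : Matrix (Fin p) (Fin p) (ZMod p)))) :=
    Module.finite_of_finite (ZMod p)
  let e := Matrix.GeneralLinearGroup.unitsAdjoinRootEquivCentralizer hdeg
  refine ⟨fun A => Matrix.GeneralLinearGroup.mem_centralizer_iff_mem_adjoin hdeg,
    isCyclic_of_surjective e.toMonoidHom e.surjective, ?_⟩
  rw [← Nat.card_congr e.toEquiv, Nat.card_units, Module.natCard_eq_pow_finrank (K := ZMod p),
    Nat.card_zmod, b.finrank, AdjoinRoot.powerBasis_dim, hdeg, Fintype.card_fin]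
end

section
/- Let p, q be primes with q dividing (p^p-1)/(p-1), and let M in GL_p(F_p) have order q. An element A of the normaliser of ⟨M⟩ in GL_p(F_p) has order q if and only if A = M^r for some r with 1 ≤ r ≤ q - 1. -/
/-!
As `∑_{i<p} p^i ≡ 0 (mod q)`, the residue of `p` has multiplicative order `p` modulo `q`.
So among the factors `p^p - p^i` of `|GL_p(𝔽_p)|` only `p^p - 1` is divisible by `q`, and
the image of the cyclic group `𝔽_{p^p}ˣ` in `GL_p(𝔽_p)` has index prime to `q`; hence the
Sylow `q`-subgroups of `GL_p(𝔽_p)` are cyclic. If `A` of order `q` normalises `⟨M⟩`, then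
`⟨A⟩⟨M⟩` is a `q`-group, so `A` and `M` lie in one cyclic group, whose only subgroup of
order `q` is `⟨M⟩`.
-/

open Subgroup

theorem orderOf_natCast_eq_self_of_geom_sum_eq_zero {R : Type*} [CommRing R] [Nontrivial R]
    {p : ℕ} (hp : p.Prime) (h : ∑ i ∈ Finset.range p, (p : R) ^ i = 0) :
    orderOf (p : R) = p := by
  have : Fact p.Prime := ⟨hp⟩
  refine orderOf_eq_prime ?_ fun h1 => ?_
  · rw [← sub_eq_zero, ← geom_sum_mul, h, zero_mul]
  · simp [h1] at h

theorem not_dvd_pow_sub_pow_of_orderOf_eq {a q n i : ℕ} (ha : 0 < a)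
    (h : orderOf (a : ZMod q) = n) (hi0 : 0 < i) (hin : i < n) : ¬ q ∣ a ^ n - a ^ i := by
  rw [← ZMod.natCast_eq_zero_iff, Nat.cast_sub (Nat.pow_le_pow_right ha hin.le), sub_eq_zero]
  push_cast
  rw [← h, pow_orderOf_eq_one]
  exact (pow_ne_one_of_lt_orderOf hi0.ne' (h ▸ hin)).symm

theorem Matrix.card_GL_field_eq_mul_prod_Ioo (F : Type*) [Field F] [Fintype F] {n : ℕ}
    (hn : n ≠ 0) :
    Nat.card (GL (Fin n) F) = (Fintype.card F ^ n - 1) *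
      ∏ i ∈ Finset.Ioo 0 n, (Fintype.card F ^ n - Fintype.card F ^ i) := by
  rw [Matrix.card_GL_field, Fin.prod_univ_eq_prod_range (Fintype.card F ^ n - Fintype.card F ^ ·),
    Finset.range_eq_Ico, Finset.Ico_eq_cons_Ioo (Nat.pos_of_ne_zero hn), Finset.prod_cons,
    pow_zero]

theorem Sylow.isCyclic_of_isCyclic_of_not_dvd_index {G : Type*} [Group G] [Finite G] {q : ℕ}
    [Fact q.Prime] {H : Subgroup G} [IsCyclic H] (hH : ¬ q ∣ H.index) (P : Sylow q G) :
    IsCyclic P := by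
  obtain ⟨Q⟩ : Nonempty (Sylow q H) := inferInstance
  have hQ : ¬ q ∣ (Q.map H.subtype).index := by
    rw [index_map_subtype]
    exact Nat.Prime.not_dvd_mul Fact.out Q.not_dvd_index hH
  let S := (Q.isPGroup'.map H.subtype).toSylow hQ
  have : IsCyclic S := (Q.equivMapOfInjective _ H.subtype_injective).isCyclic.mp inferInstance
  exact (Sylow.equiv P S).isCyclic.mpr this

namespace Matrix.GeneralLinearGroup

variable {p n : ℕ} [hp : Fact p.Prime]

theorem exists_isCyclic_subgroup_card_eq (hn : n ≠ 0) :
    ∃ H : Subgroup (GL (Fin n) (ZMod p)), IsCyclic H ∧ Nat.card H = p ^ n - 1 := by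
  let b := Module.finBasisOfFinrankEq (ZMod p) (GaloisField p n) (GaloisField.finrank p hn)
  let f := Units.map (Algebra.leftMulMatrix b).toMonoidHom
  have hf : Function.Injective f := Units.map_injective (Algebra.leftMulMatrix_injective b)
  refine ⟨f.range, isCyclic_of_surjective _ f.rangeRestrict_surjective, ?_⟩
  rw [Nat.card_congr (MonoidHom.ofInjective hf).toEquiv.symm, Nat.card_units,
    GaloisField.card p n hn]

theorem isCyclic_sylow_of_orderOf_eq {q : ℕ} [hq : Fact q.Prime] (hn : n ≠ 0)
    (h : orderOf (p : ZMod q) = n) (P : Sylow q (GL (Fin n) (ZMod p))) : IsCyclic P := by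
  obtain ⟨H, hcyc, hcard⟩ := exists_isCyclic_subgroup_card_eq (p := p) hn
  refine Sylow.isCyclic_of_isCyclic_of_not_dvd_index (H := H) ?_ P
  have hindex : H.index = ∏ i ∈ Finset.Ioo 0 n, (p ^ n - p ^ i) := by
    have := H.card_mul_index
    rw [hcard, card_GL_field_eq_mul_prod_Ioo _ hn, ZMod.card] at this
    exact Nat.eq_of_mul_eq_mul_left (Nat.sub_pos_of_lt (Nat.one_lt_pow hn hp.out.one_lt)) this
  rw [hindex, hq.out.prime.dvd_finsetProd_iff]
  rintro ⟨i, hi, hdvd⟩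
  rw [Finset.mem_Ioo] at hi
  exact not_dvd_pow_sub_pow_of_orderOf_eq hp.out.pos h hi.1 hi.2 hdvd

end Matrix.GeneralLinearGroup

theorem IsCyclic.mem_zpowers_of_orderOf_dvd {α : Type*} [Group α] [Finite α] [IsCyclic α]
    {x y : α} (h : orderOf x ∣ orderOf y) : x ∈ zpowers y := by
  classical
  have := Fintype.ofFinite α
  let roots : Finset α := {z | z ^ orderOf y = 1}
  have hsub : (zpowers y : Set α).toFinset ⊆ roots := fun z hz => by
    rw [Set.mem_toFinset] at hz
    simpa [roots] using orderOf_dvd_iff_pow_eq_one.mp (orderOf_dvd_of_mem_zpowers hz)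
  have heq := Finset.eq_of_subset_of_card_le hsub (by
    rw [Set.toFinset_card, ← Nat.card_eq_fintype_card, SetLike.coe_sort_coe, Nat.card_zpowers]
    exact IsCyclic.card_pow_eq_one_le (orderOf_pos y))
  have hx : x ∈ roots := by simpa [roots] using orderOf_dvd_iff_pow_eq_one.mp h
  simpa [← heq] using hx

theorem mem_zpowers_of_forall_sylow_isCyclic {G : Type*} [Group G] [Finite G] {q k : ℕ}
    [Fact q.Prime] (hcyc : ∀ P : Sylow q G, IsCyclic P) {A M : G} (hM : orderOf M = q ^ k)
    (hord : orderOf A ∣ orderOf M) (hAM : A ∈ normalizer (zpowers M)) : A ∈ zpowers M := by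
  obtain ⟨j, -, hA⟩ := (Nat.dvd_prime_pow Fact.out).mp (hM ▸ hord)
  have hApg : IsPGroup q (zpowers A) := .of_card (by rw [Nat.card_zpowers, hA])
  have hMpg : IsPGroup q (zpowers M) := .of_card (by rw [Nat.card_zpowers, hM])
  obtain ⟨P, hP⟩ := (hApg.to_sup_of_normal_right' hMpg (zpowers_le.mpr hAM)).exists_le_sylow
  have := hcyc P
  let A' : P := ⟨A, hP (mem_sup_left (mem_zpowers A))⟩
  let M' : P := ⟨M, hP (mem_sup_right (mem_zpowers M))⟩
  obtain ⟨n, hn⟩ := IsCyclic.mem_zpowers_of_orderOf_dvd (x := A') (y := M')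
    (by rwa [orderOf_mk, orderOf_mk])
  exact ⟨n, congrArg Subtype.val hn⟩

theorem stmt_12 (p q : ℕ) (hp : p.Prime) (hq : q.Prime)
    (hdvd : q ∣ ∑ i ∈ Finset.range p, p ^ i)
    (M : GL (Fin p) (ZMod p)) (hM : orderOf M = q)
    (A : GL (Fin p) (ZMod p)) (hA : A ∈ Subgroup.normalizer (Subgroup.zpowers M)) :
    orderOf A = q ↔ ∃ r : ℕ, 1 ≤ r ∧ r ≤ q - 1 ∧ A = M ^ r := by
  have : Fact p.Prime := ⟨hp⟩
  have : Fact q.Prime := ⟨hq⟩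
  have hord : orderOf (p : ZMod q) = p := orderOf_natCast_eq_self_of_geom_sum_eq_zero hp (by
    exact_mod_cast (ZMod.natCast_eq_zero_iff _ q).mpr hdvd)
  constructor
  · intro hAq
    have hmem := mem_zpowers_of_forall_sylow_isCyclic
      (Matrix.GeneralLinearGroup.isCyclic_sylow_of_orderOf_eq hp.ne_zero hord)
      (hM.trans (pow_one q).symm) (by rw [hAq, hM]) hA
    classical
    obtain ⟨r, hr, rfl⟩ := Finset.mem_image.mp (mem_zpowers_iff_mem_range_orderOf.mp hmem)
    have hr0 : r ≠ 0 := by rintro rfl; simp [hq.ne_one.symm] at hAq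
    rw [Finset.mem_range, hM] at hr
    exact ⟨r, by omega, by omega, rfl⟩
  · rintro ⟨r, hr1, hr2, rfl⟩
    have hcop : (orderOf M).Coprime r := by
      rw [hM, hq.coprime_iff_not_dvd]
      exact Nat.not_dvd_of_pos_of_lt hr1 (by omega)
    rw [hcop.orderOf_pow, hM]
end

section
/- Let N be a finite group and G = {g_η : η ∈ N} a regular subgroup of the holomorph Hol(N) = N ⋊ Aut(N), where g_η = (η, α_η). Define g*_η = (η^{-1}, conj(η) ∘ α_η), where conj(η) is conjugation by η. Then G* = {g*_η : η ∈ N} is a subgroup of Hol(N) and the map g_η ↦ g*_η is a group isomorphism from G to G*. -/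
/-- The holomorph of a group `N`, i.e. `N ⋊ Aut(N)` with the natural action. -/
abbrev Hol (N : Type*) [Group N] := SemidirectProduct N (MulAut N) (MonoidHom.id (MulAut N))

/-- The natural action of `Hol N` on (the underlying set of) `N`:
`(η, α) • μ = η * α μ`. -/
def holAct {N : Type*} [Group N] (g : Hol N) (μ : N) : N := g.left * g.right μ

theorem stmt_13 (N : Type*) [Group N] [Finite N] (G : Subgroup (Hol N))
    (hreg : ∀ η μ : N, ∃! g : Hol N, g ∈ G ∧ holAct g η = μ)
    (gfun : N → Hol N) (hmem : ∀ η, gfun η ∈ G) (hfst : ∀ η, (gfun η).left = η)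
    (star : N → Hol N)
    (hstar : ∀ η, star η =
      ⟨η⁻¹, MulAut.conj η * (gfun η).right⟩) :
    (∃ Gstar : Subgroup (Hol N), (Gstar : Set (Hol N)) = Set.range star) ∧
      Function.Injective star ∧
      ∀ η η' : N, star η * star η' = star ((gfun η * gfun η').left) := by
  -- every element of G equals gfun of its left component
  have huniq : ∀ g ∈ G, g = gfun g.left := by
    intro g hg
    obtain ⟨u, _, hun⟩ := hreg 1 g.left
    have h1 : g = u := hun g ⟨hg, by simp [holAct]⟩
    have h2 : gfun g.left = u := hun _ ⟨hmem _, by simp [holAct, hfst]⟩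
    exact h1.trans h2.symm
  have hmul : ∀ η η', gfun ((gfun η * gfun η').left) = gfun η * gfun η' :=
    fun η η' => (huniq _ (mul_mem (hmem η) (hmem η'))).symm
  have hone : gfun 1 = 1 := by
    have := huniq 1 (one_mem G)
    simpa using this.symm
  have hinv : ∀ η, gfun (((gfun η)⁻¹).left) = (gfun η)⁻¹ :=
    fun η => (huniq _ (inv_mem (hmem η))).symm
  -- commuting automorphisms with conjugation
  have hconj : ∀ (α : MulAut N) (x : N), α * MulAut.conj x = MulAut.conj (α x) * α := by
    intro α x
    ext μ
    simp [MulAut.conj, mul_assoc]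
  have key : ∀ η η' : N, star η * star η' = star ((gfun η * gfun η').left) := by
    intro η η'
    set α := (gfun η).right with hα
    set α' := (gfun η').right with hα'
    have hleft : (gfun η * gfun η').left = η * α η' := by
      rw [SemidirectProduct.mul_left, hfst, hfst]; rfl
    have hright : (gfun ((gfun η * gfun η').left)).right = α * α' := by
      rw [hmul]; rfl
    rw [hstar, hstar, hstar]
    refine SemidirectProduct.ext ?_ ?_
    · show η⁻¹ * (MulAut.conj η * α) η'⁻¹ = ((gfun η * gfun η').left)⁻¹
      rw [hleft]
      simp [MulAut.conj, mul_assoc]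
    · show (MulAut.conj η * α) * (MulAut.conj η' * α') =
        MulAut.conj ((gfun η * gfun η').left) * (gfun ((gfun η * gfun η').left)).right
      rw [hright, hleft, map_mul, mul_assoc, ← mul_assoc α, hconj, mul_assoc, mul_assoc]
  have hone_mem : (1 : Hol N) ∈ Set.range star := by
    refine ⟨1, ?_⟩
    rw [hstar]
    exact SemidirectProduct.ext (by simp) (by simp [hone])
  have hinv_mem : ∀ x ∈ Set.range star, x⁻¹ ∈ Set.range star := by
    rintro _ ⟨η, rfl⟩
    refine ⟨((gfun η)⁻¹).left, ?_⟩
    set α := (gfun η).right with hα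
    have hl : ((gfun η)⁻¹).left = α⁻¹ η⁻¹ := by
      rw [SemidirectProduct.inv_left, hfst]; rfl
    have hr : (gfun (((gfun η)⁻¹).left)).right = α⁻¹ := by rw [hinv]; rfl
    rw [hstar, hstar]
    refine SemidirectProduct.ext ?_ ?_
    · show (((gfun η)⁻¹).left)⁻¹ = ((MulAut.conj η * α)⁻¹) (η⁻¹)⁻¹
      rw [hl]
      simp [mul_inv_rev, map_inv, MulAut.mul_apply, MulAut.conj_inv_apply]
    · show MulAut.conj (((gfun η)⁻¹).left) * (gfun (((gfun η)⁻¹).left)).right =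
        (MulAut.conj η * α)⁻¹
      rw [hr, hl, mul_inv_rev, ← hconj α⁻¹ η⁻¹, map_inv]
  refine ⟨⟨{ carrier := Set.range star
             one_mem' := hone_mem
             mul_mem' := by
               rintro _ _ ⟨η, rfl⟩ ⟨η', rfl⟩
               exact ⟨_, (key η η').symm⟩
             inv_mem' := fun hx => hinv_mem _ hx }, rfl⟩, ?_, key⟩
  intro η η' h
  have := congrArg SemidirectProduct.left h
  rw [hstar, hstar] at this
  simpa using this
end

section
/- Let p, q be primes with q dividing (p^p-1)/(p-1), and let N = V ⋊ C_q with V = F_p^p and C_q acting via a matrix M of order q. Then N has no subgroup of order p^i q for any i with 0 < i < p. -/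
/-!
Since `q ∣ 1 + p + ⋯ + p ^ (p - 1)`, the order of `p` modulo `q` is `p`, so `q` divides no
`p ^ m - 1` with `0 < m < p`, hence no `|GL_d(𝔽_p)|` with `d < p`. A subgroup `H` of order
`p ^ i * q` maps onto `C_q` and meets `V` in a subspace `W` of order `p ^ i`, which is
`M`-invariant because `V` is abelian. Both `W` and `V ⧸ W` have dimension `< p`, so `M` acts
trivially on each: `(M - 1) ^ 2 = 0`, whence `M ^ p = 1` in characteristic `p`, contradicting
`orderOf M = q ≠ p`.
-/

open Finset

theorem Nat.not_dvd_geomSum_self {p n : ℕ} (hp : p ≠ 1) (hn : 0 < n) :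
    ¬ p ∣ ∑ i ∈ range n, p ^ i := by
  obtain ⟨n, rfl⟩ := Nat.exists_eq_add_of_lt hn
  rw [zero_add, sum_range_succ', pow_zero]
  intro h
  have hdvd : p ∣ ∑ i ∈ range n, p ^ (i + 1) := dvd_sum fun i _ ↦ dvd_pow_self p i.succ_ne_zero
  exact hp (Nat.dvd_one.mp ((Nat.dvd_add_right hdvd).mp h))

theorem ne_of_dvd_geomSum_self {p q : ℕ} (hp : p.Prime) (hdvd : q ∣ ∑ i ∈ range p, p ^ i) :
    p ≠ q := by
  rintro rfl
  exact Nat.not_dvd_geomSum_self hp.ne_one hp.pos hdvd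

theorem orderOf_natCast_zmod_of_dvd_geomSum_self {p q : ℕ} (hp : p.Prime) (hq : q.Prime)
    (hdvd : q ∣ ∑ i ∈ range p, p ^ i) : orderOf (p : ZMod q) = p := by
  have := Fact.mk hp
  have hsum : ∑ i ∈ range p, (p : ZMod q) ^ i = 0 := by
    exact_mod_cast (ZMod.natCast_eq_zero_iff _ _).mpr hdvd
  refine orderOf_eq_prime ?_ fun h1 ↦ ne_of_dvd_geomSum_self hp hdvd ?_
  · rw [← sub_eq_zero, ← geom_sum_mul, hsum, zero_mul]
  · rw [h1] at hsum
    simp only [one_pow, sum_const, card_range, nsmul_eq_mul, mul_one] at hsum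
    exact ((Nat.prime_dvd_prime_iff_eq hq hp).mp ((ZMod.natCast_eq_zero_iff _ _).mp hsum)).symm

theorem not_dvd_pow_sub_one_of_dvd_geomSum_self {p q : ℕ} (hp : p.Prime) (hq : q.Prime)
    (hdvd : q ∣ ∑ i ∈ range p, p ^ i) {m : ℕ} (hm0 : 0 < m) (hmp : m < p) :
    ¬ q ∣ p ^ m - 1 := by
  intro h
  have hpow : (p : ZMod q) ^ m = 1 := by
    have := (ZMod.natCast_eq_natCast_iff' _ _ _).mpr
      ((Nat.modEq_iff_dvd' (Nat.one_le_pow _ _ hp.pos)).mpr h)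
    exact_mod_cast this.symm
  have := orderOf_natCast_zmod_of_dvd_geomSum_self hp hq hdvd ▸ orderOf_dvd_of_pow_eq_one hpow
  exact hmp.not_ge (Nat.le_of_dvd hm0 this)

theorem not_dvd_card_GL_of_dvd_geomSum_self {p q : ℕ} (hp : p.Prime) (hq : q.Prime)
    (hdvd : q ∣ ∑ i ∈ range p, p ^ i) {d : ℕ} (hdp : d < p) :
    ¬ q ∣ Nat.card (GL (Fin d) (ZMod p)) := by
  have := Fact.mk hp
  rw [Matrix.card_GL_field, ZMod.card]
  intro h
  obtain ⟨j, -, hj⟩ := (Prime.dvd_finsetProd_iff hq.prime _).mp h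
  have hsplit : p ^ d - p ^ (j : ℕ) = p ^ (j : ℕ) * (p ^ (d - j) - 1) := by
    rw [Nat.mul_sub, mul_one, ← pow_add, Nat.add_sub_cancel' j.2.le]
  rw [hsplit] at hj
  rcases (Nat.Prime.dvd_mul hq).mp hj with h | h
  · exact ne_of_dvd_geomSum_self hp hdvd
      ((Nat.prime_dvd_prime_iff_eq hq hp).mp (hq.dvd_of_dvd_pow h)).symm
  · exact not_dvd_pow_sub_one_of_dvd_geomSum_self hp hq hdvd (Nat.sub_pos_of_lt j.2)
      ((Nat.sub_le _ _).trans_lt hdp) h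

theorem one_add_pow_of_mul_self_eq_zero {R : Type*} [Ring R] {N : R} (hN : N * N = 0) (k : ℕ) :
    (1 + N) ^ k = 1 + k • N := by
  induction k with
  | zero => simp
  | succ k ih =>
    rw [pow_succ, ih, add_mul, one_mul, mul_add, mul_one, smul_mul_assoc, hN, smul_zero,
      add_zero, succ_nsmul]
    abel

namespace Module.End

theorem eq_one_of_pow_eq_one_of_not_dvd_card_GL_s17 {K V : Type*} [Field K] [AddCommGroup V]
    [Module K V] [FiniteDimensional K V] {q : ℕ} (hq : q.Prime) {f : Module.End K V}
    (hf : f ^ q = 1) (hGL : ¬ q ∣ Nat.card (GL (Fin (Module.finrank K V)) K)) : f = 1 := by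
  by_contra hne
  have := Fact.mk hq
  have hunit : IsUnit f := IsUnit.of_pow_eq_one hf hq.ne_zero
  have hord : orderOf hunit.unit = q := by
    rw [← orderOf_units, IsUnit.unit_spec, orderOf_eq_prime hf hne]
  refine hGL ?_
  rw [← hord, ← Nat.card_congr (Units.mapEquiv
    (LinearMap.toMatrixAlgEquiv (Module.finBasis K V)).toMulEquiv).toEquiv]
  exact orderOf_dvd_natCard _

theorem pow_char_eq_one_of_restrict_eq_one_of_mapQ_eq_one {R V : Type*} [CommRing R]
    [AddCommGroup V] [Module R V] {p : ℕ} [CharP R p] {L : Module.End R V} {W : Submodule R V}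
    (hW : W ≤ W.comap L) (hres : L.restrict hW = 1) (hquot : W.mapQ W L hW = 1) :
    L ^ p = 1 := by
  set N := L - 1
  have hNW : ∀ v, N v ∈ W := fun v ↦ by
    have := LinearMap.congr_fun hquot (W.mkQ v)
    simpa [N, Submodule.Quotient.eq] using this
  have hN : N * N = 0 := LinearMap.ext fun v ↦ by
    have := congrArg Subtype.val (LinearMap.congr_fun hres ⟨N v, hNW v⟩)
    simpa [N, sub_eq_zero] using this
  have hL : L = 1 + N := by simp [N]
  rw [hL, one_add_pow_of_mul_self_eq_zero hN, ← Nat.cast_smul_eq_nsmul R, CharP.cast_eq_zero,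
    zero_smul, add_zero]

end Module.End

theorem Module.finrank_zmod_eq_of_natCard_eq_pow {p : ℕ} [Fact p.Prime] {V : Type*}
    [AddCommGroup V] [Module (ZMod p) V] [Module.Finite (ZMod p) V] {i : ℕ}
    (h : Nat.card V = p ^ i) : Module.finrank (ZMod p) V = i := by
  rw [Module.natCard_eq_pow_finrank (K := ZMod p), Nat.card_zmod] at h
  exact Nat.pow_right_injective (Fact.out : p.Prime).two_le h

theorem Submodule.eq_bot_or_eq_top_of_le_comap {K V : Type*} [Field K] [AddCommGroup V]
    [Module K V] [FiniteDimensional K V] {p q : ℕ} [CharP K p] (hp : p.Prime) (hq : q.Prime)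
    (hpq : p ≠ q) (hGL : ∀ d < Module.finrank K V, ¬ q ∣ Nat.card (GL (Fin d) K))
    {L : Module.End K V} (hL : orderOf L = q) {W : Submodule K V} (hW : W ≤ W.comap L) :
    W = ⊥ ∨ W = ⊤ := by
  by_contra! hWne
  have hLq : L ^ q = 1 := hL ▸ pow_orderOf_eq_one L
  have hres : L.restrict hW = 1 := by
    refine Module.End.eq_one_of_pow_eq_one_of_not_dvd_card_GL_s17 hq ?_
      (hGL _ (Submodule.finrank_lt hWne.2))
    ext x
    simp [Module.End.pow_restrict, hLq]
  have hquot : W.mapQ W L hW = 1 := by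
    refine Module.End.eq_one_of_pow_eq_one_of_not_dvd_card_GL_s17 hq ?_ (hGL _ ?_)
    · rw [← Submodule.mapQ_pow]
      ext x
      simp [hLq]
    · have := W.finrank_quotient_add_finrank
      have := Submodule.finrank_eq_zero.not.mpr hWne.1
      omega
  have hLp := Module.End.pow_char_eq_one_of_restrict_eq_one_of_mapQ_eq_one (p := p) hW hres hquot
  exact hpq ((Nat.prime_dvd_prime_iff_eq hq hp).mp (hL ▸ orderOf_dvd_of_pow_eq_one hLp)).symm

theorem Subgroup.card_ker_inf_mul_card_map {G G' : Type*} [Group G] [Group G'] (f : G →* G')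
    (H : Subgroup G) : Nat.card (f.ker ⊓ H : Subgroup G) * Nat.card (H.map f) = Nat.card H := by
  rw [← relIndex_ker, ← inf_relIndex_right, ← relIndex_bot_left, ← relIndex_bot_left,
    relIndex_mul_relIndex _ _ _ bot_le inf_le_right]

namespace SemidirectProduct

variable {N G : Type*} [Group N] [Group G] {φ : G →* MulAut N}

theorem card_comap_inl_mul_card_map_rightHom (H : Subgroup (N ⋊[φ] G)) :
    Nat.card (H.comap inl) * Nat.card (H.map rightHom) = Nat.card H := by
  rw [← Subgroup.card_map_of_injective (f := (inl : N →* N ⋊[φ] G)) inl_injective,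
    Subgroup.map_comap_eq, range_inl_eq_ker_rightHom, Subgroup.card_ker_inf_mul_card_map]

theorem mul_inl_mul_inv {N : Type*} [CommGroup N] {φ : G →* MulAut N} (x : N ⋊[φ] G) (n : N) :
    x * inl n * x⁻¹ = inl (φ x.right n) := by
  ext <;> simp [mul_right_comm]

theorem map_right_mem_comap_inl {N : Type*} [CommGroup N] {φ : G →* MulAut N}
    {H : Subgroup (N ⋊[φ] G)} {x : N ⋊[φ] G} (hx : x ∈ H) {n : N} (hn : n ∈ H.comap inl) :
    φ x.right n ∈ H.comap inl := by
  rw [Subgroup.mem_comap, ← mul_inl_mul_inv]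
  exact H.mul_mem (H.mul_mem hx hn) (H.inv_mem hx)

theorem map_rightHom_eq_top_of_coprime {q : ℕ} (hq : q.Prime) (hG : Nat.card G = q)
    (hN : Nat.Coprime q (Nat.card N)) {H : Subgroup (N ⋊[φ] G)} (hH : q ∣ Nat.card H) :
    H.map rightHom = ⊤ := by
  have : Finite G := Nat.finite_of_card_ne_zero (hG ▸ hq.ne_zero)
  refine Subgroup.eq_top_of_card_eq _ (Nat.dvd_antisymm (Subgroup.card_subgroup_dvd_card _) ?_)
  have hS : Nat.Coprime q (Nat.card (H.comap inl)) :=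
    hN.coprime_dvd_right (Subgroup.card_subgroup_dvd_card _)
  rw [← card_comap_inl_mul_card_map_rightHom] at hH
  exact hG ▸ hS.dvd_of_dvd_mul_left hH

end SemidirectProduct

open SemidirectProduct in
theorem stmt_17 (p q : ℕ) (hp : p.Prime) (hq : q.Prime)
    (hdvd : q ∣ ∑ i ∈ Finset.range p, p ^ i)
    (M : GL (Fin p) (ZMod p)) (hM : orderOf M = q)
    (φ : Multiplicative (ZMod q) →* MulAut (Multiplicative (Fin p → ZMod p)))
    (hφ : ∀ v : Fin p → ZMod p,
      φ (Multiplicative.ofAdd (1 : ZMod q)) (Multiplicative.ofAdd v) =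
        Multiplicative.ofAdd ((M : Matrix (Fin p) (Fin p) (ZMod p)).mulVec v))
    (i : ℕ) (hi1 : 0 < i) (hi2 : i < p) :
    ¬ ∃ H : Subgroup
        (SemidirectProduct (Multiplicative (Fin p → ZMod p)) (Multiplicative (ZMod q)) φ),
      Nat.card H = p ^ i * q := by
  have := Fact.mk hp
  rintro ⟨H, hH⟩
  have hpq : p ≠ q := ne_of_dvd_geomSum_self hp hdvd
  have hC : Nat.card (Multiplicative (ZMod q)) = q := by
    rw [Nat.card_congr Multiplicative.toAdd, Nat.card_zmod]
  have hV : Nat.Coprime q (Nat.card (Multiplicative (Fin p → ZMod p))) := by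
    simpa [Nat.card_zmod] using Nat.Coprime.pow_right p ((Nat.coprime_primes hq hp).mpr hpq.symm)
  have htop := map_rightHom_eq_top_of_coprime hq hC hV (hH ▸ dvd_mul_left q _)
  obtain ⟨x, hxH, hx⟩ : Multiplicative.ofAdd (1 : ZMod q) ∈ H.map rightHom := htop ▸ trivial
  have hS : Nat.card (H.comap inl) = p ^ i := by
    have := card_comap_inl_mul_card_map_rightHom H
    rw [htop, Subgroup.card_top, hC, hH] at this
    exact Nat.eq_of_mul_eq_mul_right hq.pos this
  let W : Submodule (ZMod p) (Fin p → ZMod p) :=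
    AddSubgroup.toZModSubmodule p (H.comap inl).toAddSubgroup'
  have hW : W ≤ W.comap (Matrix.toLin' (M : Matrix (Fin p) (Fin p) (ZMod p))) := fun v hv ↦ by
    have := map_right_mem_comap_inl hxH (n := Multiplicative.ofAdd v) hv
    rwa [show x.right = _ from hx, hφ] at this
  have hWi : Module.finrank (ZMod p) W = i := Module.finrank_zmod_eq_of_natCard_eq_pow <|
    (Nat.card_congr (Equiv.subtypeEquiv Multiplicative.ofAdd fun _ ↦ Iff.rfl)).trans hS
  have hL : orderOf (Matrix.toLin' (M : Matrix (Fin p) (Fin p) (ZMod p))) = q :=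
    (Matrix.toLinAlgEquiv'.toMulEquiv.orderOf_eq _).trans (orderOf_units.trans hM)
  have hGL (d : ℕ) (hd : d < Module.finrank (ZMod p) (Fin p → ZMod p)) :
      ¬ q ∣ Nat.card (GL (Fin d) (ZMod p)) :=
    not_dvd_card_GL_of_dvd_geomSum_self hp hq hdvd (by simpa using hd)
  rcases Submodule.eq_bot_or_eq_top_of_le_comap hp hq hpq hGL hL hW with h | h <;>
    rw [h] at hWi <;> simp at hWi <;> omega
end
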